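/- Let p ≥ 3 be a prime, 1 ≤ r < p, and let G_{E^{(p)}} be the multi-edge spinal group defined by an r-tuple E^{(p)} = (e_1,…,e_r) of linearly independent vectors e_i = (e_{i,1},…,e_{i,p−1}) in (Z/pZ)^{p−1}. Suppose there exist k ∈ {1,…,r} and j ∈ {1,…,p−1} such that e_{k,j} ≠ 0 and e_{i,p−j} = 0 for all 1 ≤ i ≤ r. Then G_{E^{(p)}} is liftable: the assignment σ(a) = (b_k^{a^{1−j}})^{(e_{k,j})^{−1}} and σ(b_i) = b_i^a for i ∈ {1,…,r} extends to a group homomorphism σ : G_{E^{(p)}} → St_{G_{E^{(p)}}}(0) such that π_0 ∘ σ is the identity on G_{E^{(p)}}. -/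

import Mathlib

/-- An automorphism of the rooted `p`-ary tree, encoded by its portrait:
at every vertex (a finite word over `Fin p`) it records the permutation of the
`p` subtrees hanging at that vertex. -/
@[ext]
structure TreeAut (p : ℕ) where
  perm : List (Fin p) → Equiv.Perm (Fin p)

namespace TreeAut

variable {p : ℕ}

/-- The section of a tree automorphism at a first-level vertex `x`. -/
def sect (g : TreeAut p) (x : Fin p) : TreeAut p := ⟨fun v => g.perm (x :: v)⟩

/-- The section of a tree automorphism at an arbitrary vertex. -/
def sectV (g : TreeAut p) : List (Fin p) → TreeAut p
  | [] => g
  | x :: v => (g.sect x).sectV v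

/-- The action of a tree automorphism on vertices (finite words over `Fin p`). -/
def act (g : TreeAut p) : List (Fin p) → List (Fin p)
  | [] => []
  | x :: v => g.perm [] x :: (g.sect x).act v

/-- The inverse of the action of a tree automorphism on vertices. -/
def actInv (g : TreeAut p) : List (Fin p) → List (Fin p)
  | [] => []
  | x :: v => (g.perm []).symm x :: (g.sect ((g.perm []).symm x)).actInv v

instance : One (TreeAut p) := ⟨⟨fun _ => 1⟩⟩

/-- Composition convention as in the paper: `g * h` acts by `g` first, then `h`. -/
instance : Mul (TreeAut p) := ⟨fun g h => ⟨fun v => (g.perm v).trans (h.perm (g.act v))⟩⟩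

instance : Inv (TreeAut p) := ⟨fun g => ⟨fun v => (g.perm (g.actInv v)).symm⟩⟩

theorem perm_one (v : List (Fin p)) : (1 : TreeAut p).perm v = 1 := rfl

theorem perm_mul (g h : TreeAut p) (v : List (Fin p)) :
    (g * h).perm v = (g.perm v).trans (h.perm (g.act v)) := rfl

theorem perm_inv (g : TreeAut p) (v : List (Fin p)) :
    (g⁻¹).perm v = (g.perm (g.actInv v)).symm := rfl

theorem sect_one (x : Fin p) : (1 : TreeAut p).sect x = 1 := rfl

theorem sect_mul (g h : TreeAut p) (x : Fin p) :
    (g * h).sect x = g.sect x * h.sect (g.perm [] x) := rfl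

theorem sect_inv (g : TreeAut p) (x : Fin p) :
    (g⁻¹).sect x = (g.sect ((g.perm []).symm x))⁻¹ := rfl

theorem act_one : ∀ v : List (Fin p), (1 : TreeAut p).act v = v
  | [] => rfl
  | x :: v => by
    show (1 : Equiv.Perm (Fin p)) x :: ((1 : TreeAut p).sect x).act v = x :: v
    rw [sect_one, act_one v]
    rfl

theorem act_mul : ∀ (v : List (Fin p)) (g h : TreeAut p), (g * h).act v = h.act (g.act v)
  | [], _, _ => rfl
  | x :: v, g, h => by
    show (g * h).perm [] x :: ((g * h).sect x).act v = _
    rw [sect_mul, act_mul v]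
    rfl

theorem act_inv : ∀ (v : List (Fin p)) (g : TreeAut p), (g⁻¹).act v = g.actInv v
  | [], _ => rfl
  | x :: v, g => by
    show (g⁻¹).perm [] x :: ((g⁻¹).sect x).act v = _
    rw [sect_inv, act_inv v]
    rfl

instance : Group (TreeAut p) where
  mul_assoc g h k := by
    ext v y
    simp [perm_mul, act_mul, Equiv.trans_apply]
  one_mul g := by
    ext v y
    simp [perm_mul, perm_one, act_one]
  mul_one g := by
    ext v y
    simp [perm_mul, perm_one]
  inv_mul_cancel g := by
    ext v y
    simp [perm_mul, perm_inv, perm_one, act_inv]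

end TreeAut

/-- The rooted automorphism `a = (1,…,1)ε`, where `ε = (0 1 … p-1)` is the cyclic
rotation `x ↦ x + 1` of `Fin p`. -/
def rot (p : ℕ) [NeZero p] : TreeAut p :=
  ⟨fun v => if v = [] then Equiv.addRight (1 : Fin p) else 1⟩

/-- The components of a defining vector `v ∈ (ℤ/pℤ)^{p-1}`, read `p`-periodically:
for `1 ≤ n ≤ p-1`, `vcomp v n` is the `n`-th component of `v` (and `vcomp v n = 0`
when `n ≡ 0 mod p`). -/
def vcomp {p : ℕ} [NeZero p] (v : Fin (p - 1) → ZMod p) (n : ℕ) : ZMod p :=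
  if h : n % p = 0 then 0
  else v ⟨n % p - 1, by
    have h2 : n % p < p := Nat.mod_lt _ (Nat.pos_of_ne_zero (NeZero.ne p))
    omega⟩

/-- `N` is a quasinucleus with constant `k` for the self-similar group generated by the
symmetric set `S`: all sections at level `k` of products of two elements of `S ∪ N` lie in `N`. -/
def IsQuasiNucleusWith (p : ℕ) (S N : Set (TreeAut p)) (k : ℕ) : Prop :=
  ∀ n₁ ∈ S ∪ N, ∀ n₂ ∈ S ∪ N, ∀ v : List (Fin p), v.length = k → (n₁ * n₂).sectV v ∈ N

/-- `N` is the nucleus of the group `G` with symmetric generating set `S`: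
`N` is the inclusion-minimal finite subset of `G` that is a quasinucleus for some
level constant `k ≥ 1`. -/
def IsNucleusOf (p : ℕ) (S : Set (TreeAut p)) (G : Subgroup (TreeAut p)) (N : Set (TreeAut p)) : Prop :=
  (N ⊆ (G : Set (TreeAut p)) ∧ N.Finite ∧ ∃ k, 1 ≤ k ∧ IsQuasiNucleusWith p S N k) ∧
  ∀ N' : Set (TreeAut p), N' ⊆ (G : Set (TreeAut p)) → N'.Finite →
    (∃ k, 1 ≤ k ∧ IsQuasiNucleusWith p S N' k) → N ⊆ N'
open Fin.NatCast in
/-- The defining wreath recursions of the generators of a multi-edge spinal group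
defined by an `r`-tuple `E^(p)` of linearly independent vectors of `(ℤ/pℤ)^{p-1}`:
each `b i` fixes all first-level vertices, has section `a^{e_{i,n}}` at the vertex
`n - 1` for `1 ≤ n ≤ p - 1` (Lean's `n : Fin (p-1)` is the paper's `n = n.val + 1`)
and section `b i` at the vertex `p - 1`. -/
def IsSpinalDatum (p : ℕ) [NeZero p] {r : ℕ}
    (e : Fin r → Fin (p - 1) → ZMod p) (b : Fin r → TreeAut p) : Prop :=
  LinearIndependent (ZMod p) e ∧
  ∀ i : Fin r,
    (∀ x : Fin p, (b i).act [x] = [x]) ∧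
    (b i).sect (((p - 1 : ℕ) : Fin p)) = b i ∧
    ∀ n : Fin (p - 1), (b i).sect ((n.val : ℕ) : Fin p) = rot p ^ (e i n).val

/-- The multi-edge spinal group `G_{E^(p)} = ⟨a, b_1, …, b_r⟩`. -/
def spinalGroup (p : ℕ) [NeZero p] {r : ℕ} (b : Fin r → TreeAut p) :
    Subgroup (TreeAut p) :=
  Subgroup.closure (insert (rot p) (Set.range b))

theorem rot_mem_spinal (p : ℕ) [NeZero p] {r : ℕ} (b : Fin r → TreeAut p) :
    rot p ∈ spinalGroup p b :=
  Subgroup.subset_closure (Set.mem_insert _ _)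

theorem b_mem_spinal (p : ℕ) [NeZero p] {r : ℕ} (b : Fin r → TreeAut p) (i : Fin r) :
    b i ∈ spinalGroup p b :=
  Subgroup.subset_closure (Set.mem_insert_of_mem _ ⟨i, rfl⟩)

/-!
`σ` is built on words in `a` and the `b i`, so it suffices that every relator `w` (`w(a, b) = 1`)
is a relator of the images `A = σ(a)` and `B i = σ(b i)`. These fix the first level, so
`w(A, B) = 1` once all its first-level sections are trivial. The section at `0` is `w(a, b)`. At
the vertex `x` with `x + j` on the spine it is a power of `b k` whose exponent is a multiple of the
total `a`-exponent of `w`, hence of `p`: the `B i` have trivial sections there by the vanishing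
column. At every other vertex all sections are powers of `a`, and the exponent is, mod `p`, a
combination of the `a`-exponent and a coordinate of the `b`-exponent vector `∑ n • e_i` of `w`.

The `b`-exponent vector of a relator vanishes, by induction on its length: if `w` contains an
`a`-letter, its first-level section words are shorter relators whose `b`-exponent vectors sum to
that of `w`; if not, the section of `w` at a non-spine vertex `m` is `a` raised to the `m`-th
coordinate of that vector.
-/

section Words

variable {r : ℕ} {G H : Type*} [Group G] [Group H]

/-- `inl s` stands for `a ^ s` and `inr (i, n)` for `b i ^ n`. -/
abbrev Letter (r : ℕ) := ℤ ⊕ (Fin r × ℤ)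

def evalW (a : G) (b : Fin r → G) : List (Letter r) → G
  | [] => 1
  | .inl s :: w => a ^ s * evalW a b w
  | .inr z :: w => b z.1 ^ z.2 * evalW a b w

def invW (w : List (Letter r)) : List (Letter r) :=
  (w.map (Sum.map Neg.neg (Prod.map id Neg.neg))).reverse

variable {a : G} {b : Fin r → G}

theorem evalW_append (w w' : List (Letter r)) :
    evalW a b (w ++ w') = evalW a b w * evalW a b w' := by
  induction w with
  | nil => simp [evalW]
  | cons l w ih => cases l <;> simp [evalW, ih, mul_assoc]

theorem evalW_invW (w : List (Letter r)) : evalW a b (invW w) = (evalW a b w)⁻¹ := by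
  induction w with
  | nil => simp [evalW, invW]
  | cons l w ih =>
    simp only [invW] at ih
    cases l <;> simp [invW, evalW, evalW_append, ih]

theorem map_evalW (f : G →* H) (w : List (Letter r)) :
    f (evalW a b w) = evalW (f a) (fun i => f (b i)) w := by
  induction w with
  | nil => simp [evalW]
  | cons l w ih => cases l <;> simp [evalW, ih]

theorem evalW_mem {K : Subgroup G} (ha : a ∈ K) (hb : ∀ i, b i ∈ K) (w : List (Letter r)) :
    evalW a b w ∈ K := by
  induction w with
  | nil => exact K.one_mem
  | cons l w ih =>
    cases l with
    | inl s => exact K.mul_mem (K.zpow_mem ha s) ih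
    | inr z => exact K.mul_mem (K.zpow_mem (hb z.1) z.2) ih

theorem exists_evalW_eq {g : G} (hg : g ∈ Subgroup.closure (insert a (Set.range b))) :
    ∃ w, evalW a b w = g := by
  induction hg using Subgroup.closure_induction with
  | mem g hg =>
    rcases hg with rfl | ⟨i, rfl⟩
    · exact ⟨[.inl 1], by simp [evalW]⟩
    · exact ⟨[.inr (i, 1)], by simp [evalW]⟩
  | one => exact ⟨[], rfl⟩
  | mul g h _ _ ihg ihh =>
    obtain ⟨w, rfl⟩ := ihg
    obtain ⟨w', rfl⟩ := ihh
    exact ⟨w ++ w', evalW_append w w'⟩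
  | inv g _ ih =>
    obtain ⟨w, rfl⟩ := ih
    exact ⟨invW w, evalW_invW w⟩

theorem exists_monoidHom_evalW (a' : H) (b' : Fin r → H)
    (hrel : ∀ w, evalW a b w = 1 → evalW a' b' w = 1) :
    ∃ σ : Subgroup.closure (insert a (Set.range b)) →* H,
      ∀ (g : Subgroup.closure (insert a (Set.range b))) w,
        evalW a b w = g → σ g = evalW a' b' w := by
  have hwd : ∀ w w', evalW a b w = evalW a b w' → evalW a' b' w = evalW a' b' w' := by
    intro w w' h
    have := hrel (w ++ invW w') (by rw [evalW_append, evalW_invW, h, mul_inv_cancel])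
    rwa [evalW_append, evalW_invW, mul_inv_eq_one] at this
  choose word hword using fun g : Subgroup.closure (insert a (Set.range b)) => exists_evalW_eq g.2
  refine ⟨{ toFun := fun g => evalW a' b' (word g), map_one' := ?_, map_mul' := ?_ }, ?_⟩
  · exact hwd _ [] (hword 1)
  · intro g h
    rw [← evalW_append]
    exact hwd _ _ (by rw [hword, evalW_append, hword, hword]; rfl)
  · intro g w hw
    exact hwd _ _ (by rw [hword, hw])

variable {M N : Type*} [AddCommGroup M] [AddCommGroup N]

def expSum (c₀ : M) (c : Fin r → M) : List (Letter r) → M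
  | [] => 0
  | .inl s :: w => s • c₀ + expSum c₀ c w
  | .inr z :: w => z.2 • c z.1 + expSum c₀ c w

def aExp (w : List (Letter r)) : ℤ := expSum 1 0 w

def bExp {ι : Type*} (e : Fin r → ι → M) (w : List (Letter r)) : ι → M := expSum 0 e w

theorem evalW_zpow (g : G) (c₀ : ℤ) (c : Fin r → ℤ) (w : List (Letter r)) :
    evalW (g ^ c₀) (fun i => g ^ c i) w = g ^ expSum c₀ c w := by
  induction w with
  | nil => simp [evalW, expSum]
  | cons l w ih => cases l <;> simp [evalW, expSum, ih, zpow_add, ← zpow_mul, mul_comm]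

theorem evalW_one_right (g : G) (w : List (Letter r)) :
    evalW g (fun _ => 1) w = g ^ aExp w := by
  simpa [aExp] using evalW_zpow g 1 0 w

theorem map_expSum (f : M →+ N) (c₀ : M) (c : Fin r → M) (w : List (Letter r)) :
    f (expSum c₀ c w) = expSum (f c₀) (fun i => f (c i)) w := by
  induction w with
  | nil => simp [expSum]
  | cons l w ih => cases l <;> simp [expSum, ih]

theorem expSum_add (c₀ d₀ : M) (c d : Fin r → M) (w : List (Letter r)) :
    expSum (c₀ + d₀) (c + d) w = expSum c₀ c w + expSum d₀ d w := by
  induction w with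
  | nil => simp [expSum]
  | cons l w ih => cases l <;> simp [expSum, ih, smul_add] <;> abel

theorem expSum_zero_right (c₀ : M) (w : List (Letter r)) : expSum c₀ 0 w = aExp w • c₀ := by
  simpa [aExp, Pi.zero_def] using (map_expSum (zmultiplesHom M c₀) 1 0 w).symm

theorem bExp_apply {ι : Type*} (e : Fin r → ι → M) (w : List (Letter r)) (n : ι) :
    bExp e w n = expSum 0 (fun i => e i n) w := by
  simpa [bExp] using map_expSum (Pi.evalAddMonoidHom (fun _ => M) n) 0 e w

end Words

namespace TreeAut

variable {p : ℕ}

/-- Valued in the opposite group since `g * h` acts by `g` first. -/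
def rootPerm : TreeAut p →* (Equiv.Perm (Fin p))ᵐᵒᵖ where
  toFun g := .op (g.perm [])
  map_one' := rfl
  map_mul' _ _ := rfl

abbrev firstLevelStab : Subgroup (TreeAut p) := rootPerm.ker

theorem mem_firstLevelStab {g : TreeAut p} : g ∈ firstLevelStab ↔ g.perm [] = 1 :=
  MulOpposite.op_eq_one_iff _

theorem perm_nil_mul (g h : TreeAut p) : (g * h).perm [] = (g.perm []).trans (h.perm []) := rfl

theorem mem_firstLevelStab_iff_act {g : TreeAut p} :
    g ∈ firstLevelStab ↔ ∀ x, g.act [x] = [x] := by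
  rw [mem_firstLevelStab]
  simp [act, Equiv.ext_iff]

theorem eq_one_of_mem_firstLevelStab {g : TreeAut p} (hg : g ∈ firstLevelStab)
    (hs : ∀ x, g.sect x = 1) : g = 1 := by
  ext v y
  cases v with
  | nil => rw [mem_firstLevelStab.1 hg]; rfl
  | cons x v => exact congrArg (fun h : TreeAut p => (h.perm v y : ℕ)) (hs x)

theorem sect_mul_of_mem_firstLevelStab {g : TreeAut p} (hg : g ∈ firstLevelStab) (h : TreeAut p)
    (x : Fin p) : (g * h).sect x = g.sect x * h.sect x := by
  rw [sect_mul, mem_firstLevelStab.1 hg]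
  rfl

def sectHom (x : Fin p) : firstLevelStab (p := p) →* TreeAut p where
  toFun g := g.1.sect x
  map_one' := rfl
  map_mul' g h := sect_mul_of_mem_firstLevelStab g.2 h x

theorem sect_zpow_of_mem_firstLevelStab {g : TreeAut p} (hg : g ∈ firstLevelStab) (x : Fin p)
    (n : ℤ) : (g ^ n).sect x = g.sect x ^ n :=
  map_zpow (sectHom x) ⟨g, hg⟩ n

theorem sect_pow_of_mem_firstLevelStab {g : TreeAut p} (hg : g ∈ firstLevelStab) (x : Fin p)
    (n : ℕ) : (g ^ n).sect x = g.sect x ^ n :=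
  map_pow (sectHom x) ⟨g, hg⟩ n

theorem sect_evalW_of_mem_firstLevelStab {r : ℕ} {a : TreeAut p} {b : Fin r → TreeAut p}
    (ha : a ∈ firstLevelStab) (hb : ∀ i, b i ∈ firstLevelStab) (x : Fin p)
    (w : List (Letter r)) :
    (evalW a b w).sect x = evalW (a.sect x) (fun i => (b i).sect x) w := by
  have hval := map_evalW firstLevelStab.subtype (a := ⟨a, ha⟩) (b := fun i => ⟨b i, hb i⟩) w
  have hsect := map_evalW (sectHom x) (a := ⟨a, ha⟩) (b := fun i => ⟨b i, hb i⟩) w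
  simp only [Subgroup.coe_subtype] at hval
  rw [← hval]
  exact hsect

def rooted : Subgroup (TreeAut p) where
  carrier := {g | ∀ x, g.sect x = 1}
  one_mem' _ := rfl
  mul_mem' hg hh x := by simp [sect_mul, hg x, hh _]
  inv_mem' hg x := by simp [sect_inv, hg _]

end TreeAut

open TreeAut

section Rot

open Fin.CommRing

variable {p : ℕ} [NeZero p]

theorem rot_mem_rooted : rot p ∈ rooted := fun _ => by
  ext v y; simp [rot, sect, perm_one]

theorem rot_zpow_sect (t : ℤ) (x : Fin p) : (rot p ^ t).sect x = 1 :=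
  zpow_mem rot_mem_rooted t x

theorem rot_zpow_perm_nil (t : ℤ) : (rot p ^ t).perm [] = Equiv.addRight (t : Fin p) := by
  induction t using Int.induction_on with
  | zero => ext; simp [perm_one]
  | succ n ih =>
    rw [zpow_add_one, perm_nil_mul, ih]
    ext y
    simp [rot, add_assoc]
  | pred n ih =>
    rw [zpow_sub_one, perm_nil_mul, ih]
    ext y
    simp [perm_inv, actInv, rot, sub_eq_add_neg, add_assoc]

theorem rot_pow_eq_one_iff (n : ℕ) : rot p ^ n = 1 ↔ p ∣ n := by
  have hperm := rot_zpow_perm_nil (p := p) n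
  rw [zpow_natCast, Int.cast_natCast] at hperm
  rw [← Fin.natCast_eq_zero (n := p)]
  constructor
  · intro h
    simpa [h, perm_one, eq_comm] using congrArg (· 0) hperm
  · intro h
    refine eq_one_of_mem_firstLevelStab (mem_firstLevelStab.2 ?_)
      (by exact_mod_cast rot_zpow_sect n)
    rw [hperm, h, Equiv.addRight_zero]

theorem orderOf_rot : orderOf (rot p) = p :=
  Nat.dvd_antisymm (orderOf_dvd_of_pow_eq_one ((rot_pow_eq_one_iff p).2 dvd_rfl))
    ((rot_pow_eq_one_iff _).1 (pow_orderOf_eq_one _))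

theorem sect_conj_rot_zpow (g : TreeAut p) (t : ℤ) (x : Fin p) :
    ((rot p ^ t)⁻¹ * g * rot p ^ t).sect x = g.sect (x - t) := by
  rw [sect_mul, rot_zpow_sect, mul_one, sect_mul, ← zpow_neg, rot_zpow_sect, one_mul,
    rot_zpow_perm_nil, Equiv.coe_addRight, Int.cast_neg, sub_eq_add_neg]

theorem dvd_aExp_of_evalW_rot_eq_one {r : ℕ} {b : Fin r → TreeAut p}
    (hb : ∀ i, b i ∈ firstLevelStab) {w : List (Letter r)} (h : evalW (rot p) b w = 1) :
    (p : ℤ) ∣ aExp w := by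
  have hroot : rot p ^ aExp w ∈ firstLevelStab := by
    have hb' : (fun i => rootPerm (b i)) = fun _ => 1 := funext hb
    rw [MonoidHom.mem_ker, map_zpow, ← evalW_one_right, ← hb', ← map_evalW, h, map_one]
  rw [← orderOf_rot (p := p), orderOf_dvd_iff_zpow_eq_one]
  exact eq_one_of_mem_firstLevelStab hroot (rot_zpow_sect _)

end Rot

/-! Writing `p = q + 1` makes `Fin (p - 1)` the type `Fin q` and splits the first-level vertices
into the `Fin.castSucc n` (section `a ^ e_{i,n}`) and the spine vertex `Fin.last q`. -/

section Spinal

open Fin.CommRing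

variable {q r : ℕ} {e : Fin r → Fin q → ZMod (q + 1)} {b : Fin r → TreeAut (q + 1)}

theorem Fin.castSucc_eq_natCast_val (n : Fin q) : n.castSucc = ((n.val : ℕ) : Fin (q + 1)) :=
  Fin.ext (Nat.mod_eq_of_lt (Nat.lt_succ_of_lt n.isLt)).symm

theorem Fin.castSucc_rev_eq_last_sub (j : Fin q) :
    j.rev.castSucc = Fin.last q - j.castSucc - 1 := by
  rw [eq_sub_iff_add_eq, eq_sub_iff_add_eq, castSucc_eq_natCast_val, castSucc_eq_natCast_val,
    ← Fin.natCast_eq_last, Fin.val_rev]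
  exact_mod_cast congrArg (Nat.cast : ℕ → Fin (q + 1))
    (by omega : q - (j.val + 1) + 1 + j.val = q)

variable (e) in
def sectW : Fin (q + 1) → List (Letter r) → List (Letter r)
  | _, [] => []
  | x, .inl s :: w => sectW (x + s) w
  | x, .inr (i, n) :: w =>
    Fin.lastCases (motive := fun _ => Letter r) (.inr (i, n)) (fun m => .inl (n * (e i m).val)) x ::
      sectW x w

theorem length_sectW (x : Fin (q + 1)) (w : List (Letter r)) :
    (sectW e x w).length = w.countP Sum.isRight := by
  induction w generalizing x with
  | nil => rfl
  | cons l w ih => rcases l with s | ⟨i, n⟩ <;> simp [sectW, ih, List.countP_cons]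

theorem sum_bExp_sectW (w : List (Letter r)) : ∑ x, bExp e (sectW e x w) = bExp e w := by
  induction w with
  | nil => simp [sectW, bExp, expSum]
  | cons l w ih =>
    rcases l with s | ⟨i, n⟩
    · have hs : bExp e (.inl s :: w) = bExp e w := by simp [bExp, expSum]
      exact hs ▸ (Equiv.sum_comp (Equiv.addRight (s : Fin (q + 1))) _).trans ih
    · simp only [bExp, Fin.sum_univ_castSucc] at ih ⊢
      simp only [sectW, expSum, Fin.lastCases_castSucc, Fin.lastCases_last, smul_zero, zero_add,
        ← ih]
      abel

theorem aExp_sectW_castSucc {w : List (Letter r)} (hw : ∀ l ∈ w, l.isRight) (m : Fin q) :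
    (aExp (sectW e m.castSucc w) : ZMod (q + 1)) = bExp e w m := by
  induction w with
  | nil => simp [sectW, aExp, bExp, expSum]
  | cons l w ih =>
    rcases l with s | ⟨i, n⟩
    · simp at hw
    · simp only [List.forall_mem_cons] at hw
      simpa [sectW, aExp, bExp, expSum] using ih hw.2

/-- The proposed images `σ(a) = (b_k^{a^{1-j}})^{e_{k,j}⁻¹}` and `σ(b_i) = b_i^a`; the paper's
`1 - j` is `-j` here, as Lean's `j : Fin q` is the paper's `j - 1`. -/
def liftA (e : Fin r → Fin q → ZMod (q + 1)) (b : Fin r → TreeAut (q + 1)) (k : Fin r)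
    (j : Fin q) : TreeAut (q + 1) :=
  ((rot (q + 1) ^ (-j.val : ℤ))⁻¹ * b k * rot (q + 1) ^ (-j.val : ℤ)) ^ (e k j)⁻¹.val

def liftB (b : Fin r → TreeAut (q + 1)) (i : Fin r) : TreeAut (q + 1) :=
  (rot (q + 1))⁻¹ * b i * rot (q + 1)

theorem sect_liftB (i : Fin r) (x : Fin (q + 1)) : (liftB b i).sect x = (b i).sect (x - 1) := by
  simpa [liftB] using sect_conj_rot_zpow (b i) 1 x

theorem liftA_mem_spinalGroup (k : Fin r) (j : Fin q) : liftA e b k j ∈ spinalGroup (q + 1) b :=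
  have hrot := rot_mem_spinal (q + 1) b
  pow_mem (mul_mem (mul_mem (inv_mem (zpow_mem hrot _)) (b_mem_spinal _ b k)) (zpow_mem hrot _)) _

theorem liftB_mem_spinalGroup (i : Fin r) : liftB b i ∈ spinalGroup (q + 1) b :=
  have hrot := rot_mem_spinal (q + 1) b
  mul_mem (mul_mem (inv_mem hrot) (b_mem_spinal _ b i)) hrot

namespace IsSpinalDatum

variable (hd : IsSpinalDatum (q + 1) e b)
include hd

theorem mem_firstLevelStab (i : Fin r) : b i ∈ firstLevelStab :=
  mem_firstLevelStab_iff_act.2 (hd.2 i).1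

theorem sect_last (i : Fin r) : (b i).sect (Fin.last q) = b i := by
  simpa [Fin.natCast_eq_last] using (hd.2 i).2.1

theorem sect_castSucc (i : Fin r) (n : Fin q) :
    (b i).sect n.castSucc = rot (q + 1) ^ (e i n).val := by
  rw [Fin.castSucc_eq_natCast_val]
  exact (hd.2 i).2.2 n

theorem pow_eq_one (i : Fin r) : b i ^ (q + 1) = 1 := by
  refine TreeAut.ext (funext fun v => ?_)
  rw [perm_one]
  induction v with
  | nil => exact TreeAut.mem_firstLevelStab.1 (pow_mem (hd.mem_firstLevelStab i) _)
  | cons x v ih =>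
    change ((b i ^ (q + 1)).sect x).perm v = 1
    rw [sect_pow_of_mem_firstLevelStab (hd.mem_firstLevelStab i)]
    induction x using Fin.lastCases with
    | last => rw [hd.sect_last]; exact ih
    | cast n =>
      rw [hd.sect_castSucc, ← pow_mul, mul_comm, pow_mul,
        (rot_pow_eq_one_iff _).2 dvd_rfl, one_pow, perm_one]

theorem sect_evalW (x : Fin (q + 1)) (w : List (Letter r)) :
    (evalW (rot (q + 1)) b w).sect x = evalW (rot (q + 1)) b (sectW e x w) := by
  induction w generalizing x with
  | nil => rfl
  | cons l w ih =>
    rcases l with s | ⟨i, n⟩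
    · rw [evalW, sect_mul, rot_zpow_sect, one_mul, rot_zpow_perm_nil, Equiv.coe_addRight, ih]
      rfl
    · rw [evalW, sect_mul_of_mem_firstLevelStab (zpow_mem (hd.mem_firstLevelStab i) n),
        sect_zpow_of_mem_firstLevelStab (hd.mem_firstLevelStab i), ih]
      induction x using Fin.lastCases with
      | last => rw [hd.sect_last]; simp [sectW, evalW]
      | cast m =>
        rw [hd.sect_castSucc]
        simp [sectW, evalW, ← zpow_natCast, ← zpow_mul, mul_comm]

theorem bExp_eq_zero (w : List (Letter r)) (h : evalW (rot (q + 1)) b w = 1) : bExp e w = 0 := by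
  by_cases hw : ∀ l ∈ w, l.isRight
  · funext m
    rw [← aExp_sectW_castSucc hw, Pi.zero_apply, ZMod.intCast_zmod_eq_zero_iff_dvd]
    exact dvd_aExp_of_evalW_rot_eq_one hd.mem_firstLevelStab (by rw [← hd.sect_evalW, h]; rfl)
  · rw [← sum_bExp_sectW]
    refine Finset.sum_eq_zero fun x _ => bExp_eq_zero _ (by rw [← hd.sect_evalW, h]; rfl)
termination_by w.length
decreasing_by
  rw [length_sectW, List.countP_eq_length_filter]
  exact List.length_filter_lt_length_iff_exists.2 (by simpa using hw)

theorem evalW_rot_pow_eq_one {w : List (Letter r)} (h : evalW (rot (q + 1)) b w = 1) (c₀ : ℕ)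
    (n : Fin q) : evalW (rot (q + 1) ^ c₀) (fun i => rot (q + 1) ^ (e i n).val) w = 1 := by
  have haExp : (aExp w : ZMod (q + 1)) = 0 :=
    (ZMod.intCast_zmod_eq_zero_iff_dvd _ _).2 (dvd_aExp_of_evalW_rot_eq_one hd.mem_firstLevelStab h)
  have hbExp : expSum 0 (fun i => e i n) w = 0 := by
    rw [← bExp_apply, hd.bExp_eq_zero w h, Pi.zero_apply]
  have hcast := map_expSum (Int.castAddHom (ZMod (q + 1))) c₀ (fun i => ((e i n).val : ℤ)) w
  simp only [Int.coe_castAddHom, Int.cast_natCast, ZMod.natCast_zmod_val] at hcast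
  simp only [← zpow_natCast, evalW_zpow]
  rw [← orderOf_dvd_iff_zpow_eq_one, orderOf_rot, ← ZMod.intCast_zmod_eq_zero_iff_dvd, hcast,
    ← add_zero (c₀ : ZMod (q + 1)), ← zero_add (fun i => e i n), expSum_add,
    expSum_zero_right, hbExp, zsmul_eq_mul, haExp, zero_mul, add_zero]

theorem liftA_mem_firstLevelStab (k : Fin r) (j : Fin q) : liftA e b k j ∈ firstLevelStab :=
  pow_mem (rootPerm.normal_ker.conj_mem' _ (hd.mem_firstLevelStab k) _) _

theorem liftB_mem_firstLevelStab (i : Fin r) : liftB b i ∈ firstLevelStab :=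
  rootPerm.normal_ker.conj_mem' _ (hd.mem_firstLevelStab i) _

theorem sect_liftA (k : Fin r) (j : Fin q) (x : Fin (q + 1)) :
    (liftA e b k j).sect x = (b k).sect (x + j.castSucc) ^ (e k j)⁻¹.val := by
  have hconj :=
    rootPerm.normal_ker.conj_mem' _ (hd.mem_firstLevelStab k) (rot (q + 1) ^ (-j.val : ℤ))
  rw [liftA, sect_pow_of_mem_firstLevelStab hconj, sect_conj_rot_zpow,
    Fin.castSucc_eq_natCast_val, Int.cast_neg, Int.cast_natCast, sub_neg_eq_add]

theorem sect_liftA_zero [Fact (q + 1).Prime] {k : Fin r} {j : Fin q} (hkj : e k j ≠ 0) :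
    (liftA e b k j).sect 0 = rot (q + 1) := by
  rw [hd.sect_liftA, zero_add, hd.sect_castSucc, ← pow_mul]
  conv_rhs => rw [← pow_one (rot (q + 1))]
  rw [pow_eq_pow_iff_modEq, orderOf_rot, ← ZMod.natCast_eq_natCast_iff]
  push_cast
  rw [ZMod.natCast_zmod_val, ZMod.natCast_zmod_val, mul_inv_cancel₀ hkj]

theorem sect_liftB_zero (i : Fin r) : (liftB b i).sect 0 = b i := by
  rw [sect_liftB, zero_sub, neg_eq_iff_add_eq_zero.2 ((add_comm _ _).trans (Fin.last_add_one q)),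
    hd.sect_last]

theorem evalW_lift_eq_one [Fact (q + 1).Prime] {k : Fin r} {j : Fin q} (hkj : e k j ≠ 0)
    (hcol : ∀ i, e i j.rev = 0) {w : List (Letter r)} (h : evalW (rot (q + 1)) b w = 1) :
    evalW (liftA e b k j) (liftB b) w = 1 := by
  have hA := hd.liftA_mem_firstLevelStab k j
  refine eq_one_of_mem_firstLevelStab (evalW_mem hA hd.liftB_mem_firstLevelStab w) fun x => ?_
  rw [sect_evalW_of_mem_firstLevelStab hA hd.liftB_mem_firstLevelStab]
  by_cases hx0 : x = 0
  · simpa only [hx0, hd.sect_liftA_zero hkj, hd.sect_liftB_zero] using h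
  by_cases hx1 : x = Fin.last q - j.castSucc
  · -- `x + j` is the spine vertex and `x - 1` is the column killed by `hcol`
    simp only [hd.sect_liftA, sect_liftB, hx1, sub_add_cancel, hd.sect_last,
      ← Fin.castSucc_rev_eq_last_sub, hd.sect_castSucc, hcol, ZMod.val_zero, pow_zero]
    rw [evalW_one_right]
    obtain ⟨c, hc⟩ := dvd_aExp_of_evalW_rot_eq_one hd.mem_firstLevelStab h
    rw [hc, zpow_mul, zpow_natCast, ← pow_mul, mul_comm, pow_mul, hd.pow_eq_one, one_pow,
      one_zpow]
  · obtain ⟨n, hn⟩ := Fin.exists_castSucc_eq.2 fun h => hx1 (eq_sub_of_add_eq h)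
    obtain ⟨n', hn'⟩ := Fin.exists_castSucc_eq.2 fun h =>
      hx0 ((sub_eq_iff_eq_add.1 h).trans (Fin.last_add_one q))
    simp only [hd.sect_liftA, sect_liftB, ← hn, ← hn', hd.sect_castSucc, ← pow_mul]
    exact hd.evalW_rot_pow_eq_one h _ n'

theorem exists_liftHom [Fact (q + 1).Prime] {k : Fin r} {j : Fin q} (hkj : e k j ≠ 0)
    (hcol : ∀ i, e i j.rev = 0) :
    ∃ σ : spinalGroup (q + 1) b →* TreeAut (q + 1),
      (∀ g, σ g ∈ spinalGroup (q + 1) b) ∧ (∀ g, σ g ∈ firstLevelStab) ∧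
      (∀ g, (σ g).sect 0 = g) ∧ σ ⟨rot (q + 1), rot_mem_spinal _ b⟩ = liftA e b k j ∧
      ∀ i, σ ⟨b i, b_mem_spinal _ b i⟩ = liftB b i := by
  have hA := hd.liftA_mem_firstLevelStab k j
  obtain ⟨σ, hσ⟩ : ∃ σ : spinalGroup (q + 1) b →* TreeAut (q + 1),
      ∀ (g : spinalGroup (q + 1) b) w,
        evalW (rot (q + 1)) b w = g → σ g = evalW (liftA e b k j) (liftB b) w :=
    exists_monoidHom_evalW _ _ fun w h => hd.evalW_lift_eq_one hkj hcol h
  have hσword (g : spinalGroup (q + 1) b) : ∃ w, evalW (rot (q + 1)) b w = g ∧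
      σ g = evalW (liftA e b k j) (liftB b) w := by
    obtain ⟨w, hw⟩ := exists_evalW_eq g.2
    exact ⟨w, hw, hσ g w hw⟩
  refine ⟨σ, fun g => ?_, fun g => ?_, fun g => ?_, ?_, fun i => ?_⟩
  · obtain ⟨w, -, hσg⟩ := hσword g
    exact hσg ▸ evalW_mem (liftA_mem_spinalGroup k j) liftB_mem_spinalGroup w
  · obtain ⟨w, -, hσg⟩ := hσword g
    exact hσg ▸ evalW_mem hA hd.liftB_mem_firstLevelStab w
  · obtain ⟨w, hw, hσg⟩ := hσword g
    rw [hσg, sect_evalW_of_mem_firstLevelStab hA hd.liftB_mem_firstLevelStab,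
      hd.sect_liftA_zero hkj]
    simpa only [hd.sect_liftB_zero] using hw
  · simpa [evalW] using hσ ⟨rot (q + 1), rot_mem_spinal _ b⟩ [.inl 1] (by simp [evalW])
  · simpa [evalW] using hσ ⟨b i, b_mem_spinal _ b i⟩ [.inr (i, 1)] (by simp [evalW])

end IsSpinalDatum

end Spinal

theorem vcomp_val_add_one {p : ℕ} [NeZero p] (v : Fin (p - 1) → ZMod p) (m : Fin (p - 1)) :
    vcomp v (m.val + 1) = v m := by
  have hm : (m.val + 1) % p = m.val + 1 := Nat.mod_eq_of_lt (by omega)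
  simp only [vcomp, hm, Nat.add_one_ne_zero, dite_false, Nat.add_sub_cancel]

theorem spinal_liftable_general (p : ℕ) [Fact p.Prime] [NeZero p]
    (r : ℕ)
    (e : Fin r → Fin (p - 1) → ZMod p)
    (b : Fin r → TreeAut p)
    (hdatum : IsSpinalDatum p e b)
    (k : Fin r) (j : Fin (p - 1))
    (hkj : e k j ≠ 0)
    (hcol : ∀ i : Fin r, vcomp (e i) (p - (j.val + 1)) = 0) :
    ∃ σ : spinalGroup p b →* TreeAut p,
      (∀ g, σ g ∈ spinalGroup p b) ∧
      (∀ g, (σ g).act [(0 : Fin p)] = [(0 : Fin p)]) ∧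
      (∀ g : spinalGroup p b, (σ g).sect 0 = (g : TreeAut p)) ∧
      σ ⟨rot p, rot_mem_spinal p b⟩ =
        ((rot p ^ ((1 : ℤ) - (j.val + 1)))⁻¹ * b k *
            rot p ^ ((1 : ℤ) - (j.val + 1))) ^ ((e k j)⁻¹).val ∧
      (∀ i : Fin r, σ ⟨b i, b_mem_spinal p b i⟩ = (rot p)⁻¹ * b i * rot p) := by
  obtain ⟨q, rfl⟩ := Nat.exists_eq_add_one_of_ne_zero (NeZero.ne p)
  have hcol' i : e i j.rev = 0 := by
    rw [← vcomp_val_add_one (e i) j.rev, ← hcol i, Fin.val_rev]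
    congr 1
    omega
  rw [show (1 : ℤ) - (j.val + 1) = -j.val by ring]
  obtain ⟨σ, hσG, hσstab, hσsect, hσa, hσb⟩ := hdatum.exists_liftHom hkj hcol'
  exact ⟨σ, hσG, fun g => mem_firstLevelStab_iff_act.1 (hσstab g) 0, hσsect, hσa, hσb⟩

/-- **Liftability of multi-edge spinal groups.** Let `p ≥ 3` be a prime,
`1 ≤ r < p`, and `G_{E^(p)}` the multi-edge spinal group defined by an `r`-tuple
of linearly independent vectors. If there are `k ∈ {1,…,r}` and `j ∈ {1,…,p-1}`
with `e_{k,j} ≠ 0` and `e_{i,p-j} = 0` for all `i`, then `G_{E^(p)}` is liftable: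
the assignment `σ(a) = (b_k^{a^{1-j}})^{(e_{k,j})⁻¹}`, `σ(b_i) = b_i^a` extends to
a homomorphism `σ : G → St_G(0)` with `π₀ ∘ σ = id`.
(Lean's `j : Fin (p-1)` is the paper's `j = j.val + 1`; `g^h = h⁻¹gh`.) -/
theorem spinal_liftable (p : ℕ) [Fact p.Prime] [NeZero p] (hp3 : 3 ≤ p)
    (r : ℕ) (hr1 : 1 ≤ r) (hrp : r < p)
    (e : Fin r → Fin (p - 1) → ZMod p)
    (b : Fin r → TreeAut p)
    (hdatum : IsSpinalDatum p e b)
    (k : Fin r) (j : Fin (p - 1))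
    (hkj : e k j ≠ 0)
    (hcol : ∀ i : Fin r, vcomp (e i) (p - (j.val + 1)) = 0) :
    ∃ σ : spinalGroup p b →* TreeAut p,
      (∀ g, σ g ∈ spinalGroup p b) ∧
      (∀ g, (σ g).act [(0 : Fin p)] = [(0 : Fin p)]) ∧
      (∀ g : spinalGroup p b, (σ g).sect 0 = (g : TreeAut p)) ∧
      σ ⟨rot p, rot_mem_spinal p b⟩ =
        ((rot p ^ ((1 : ℤ) - (j.val + 1)))⁻¹ * b k *
            rot p ^ ((1 : ℤ) - (j.val + 1))) ^ ((e k j)⁻¹).val ∧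
      (∀ i : Fin r, σ ⟨b i, b_mem_spinal p b i⟩ = (rot p)⁻¹ * b i * rot p) :=
  spinal_liftable_general p r e b hdatum k j hkj hcol
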